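/- arXiv:2303.03079 — 2 statements merged into one kernel-verified Lean document; each statement's English description precedes it below -/
import Mathlib

section
/- Let F_q be a finite field, let n, r, t be positive integers, let B_r be an r×n matrix and B_t a t×n matrix over F_q, and let A be any t×t matrix over F_q. Let D_A ⊆ F_q^{2n} be the row space of the (t+2r)×2n block matrix with block rows (B_t | A·B_t), (B_r | 0), (0 | B_r). Then dim_{F_q} D_A − dim_{F_q}(D_A ∩ D_A^{⊥s}) equals the rank of the (t+2r)×(t+2r) block matrix M := [[B_tB_tᵀAᵀ − A B_tB_tᵀ, −A B_tB_rᵀ, B_tB_rᵀ], [B_rB_tᵀAᵀ, 0, B_rB_rᵀ], [−B_rB_tᵀ, −B_rB_rᵀ, 0]]. -/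
open Matrix

/-- The dual of a subspace `D ⊆ F^n × F^n` with respect to the symplectic product
`(x|y)·ₛ(z|w) = x·w - z·y`. -/
def sympDual {F : Type*} [Field F] {n : ℕ}
    (C : Submodule F ((Fin n → F) × (Fin n → F))) :
    Submodule F ((Fin n → F) × (Fin n → F)) where
  carrier := { v | ∀ u ∈ C, u.1 ⬝ᵥ v.2 - v.1 ⬝ᵥ u.2 = 0 }
  add_mem' := by
    intro a b ha hb u hu
    have h1 := ha u hu
    have h2 := hb u hu
    simp only [Prod.fst_add, Prod.snd_add, dotProduct_add, add_dotProduct]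
    linear_combination h1 + h2
  zero_mem' := by
    intro u hu
    simp
  smul_mem' := by
    intro c v hv u hu
    have h := hv u hu
    simp only [Prod.smul_fst, Prod.smul_snd, dotProduct_smul, smul_dotProduct,
      smul_eq_mul]
    linear_combination c * h

/-! `M` is the Gram matrix `X Yᵀ - Y Xᵀ` of the symplectic form on the generators
`(X i | Y i)` of `D_A`. For any bilinear form `B` and family `v`, the Gram matrix of `v` factors as
`x ↦ ∑ xᵢ vᵢ` followed by `w ↦ (B (v i) w)ᵢ`, so its rank is the dimension of the image of
`span v` under the second map; the kernel of that map restricted to `span v` is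
`span v ⊓ (span v)^⊥`, and rank–nullity gives the claim. -/

open Module Submodule

theorem Submodule.finrank_map_add_finrank_inf_ker {K V W : Type*} [DivisionRing K]
    [AddCommGroup V] [Module K V] [AddCommGroup W] [Module K W]
    (f : V →ₗ[K] W) (p : Submodule K V) [FiniteDimensional K p] :
    finrank K (p.map f) + finrank K ↥(p ⊓ LinearMap.ker f) = finrank K p := by
  rw [← LinearMap.range_domRestrict, ← map_comap_subtype, finrank_map_subtype_eq,
    ← LinearMap.ker_domRestrict]
  exact (f.domRestrict p).finrank_range_add_finrank_ker

namespace LinearMap.BilinForm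

variable {K V ι : Type*} [Field K] [AddCommGroup V] [Module K V]
  (B : LinearMap.BilinForm K V) (v : ι → V)

theorem ker_pi_eq_orthogonal_span :
    ker (LinearMap.pi fun i => B (v i)) = B.orthogonal (span K (Set.range v)) := by
  ext w
  simpa [funext_iff, SetLike.le_def, Set.range_subset_iff] using
    (span_le (s := Set.range v) (p := ker (B.flip w))).symm

theorem mulVecLin_gram [Fintype ι] :
    (Matrix.of fun i j => B (v i) (v j)).mulVecLin =
      (LinearMap.pi fun i => B (v i)) ∘ₗ Fintype.linearCombination K v := by
  ext x i
  simp [mulVec, dotProduct, Fintype.linearCombination_apply, mul_comm]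

theorem finrank_span_sub_finrank_inf_orthogonal_eq_rank [Fintype ι] :
    finrank K (span K (Set.range v)) -
        finrank K ↥(span K (Set.range v) ⊓ B.orthogonal (span K (Set.range v))) =
      (Matrix.of fun i j => B (v i) (v j)).rank := by
  have := FiniteDimensional.span_of_finite K (Set.finite_range v)
  rw [Matrix.rank, mulVecLin_gram, range_comp, Fintype.range_linearCombination,
    ← ker_pi_eq_orthogonal_span,
    ← finrank_map_add_finrank_inf_ker (LinearMap.pi fun i => B (v i))]
  omega

end LinearMap.BilinForm

section Symplectic

variable {F : Type*} [Field F] {n : ℕ}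

variable (F n) in
def symplecticForm : LinearMap.BilinForm F ((Fin n → F) × (Fin n → F)) :=
  let P := (dotProductBilin F F).compl₁₂ (LinearMap.fst F _ _) (LinearMap.snd F _ _)
  P - P.flip

@[simp]
theorem symplecticForm_apply (u w : (Fin n → F) × (Fin n → F)) :
    symplecticForm F n u w = u.1 ⬝ᵥ w.2 - w.1 ⬝ᵥ u.2 :=
  rfl

theorem sympDual_eq_orthogonal (C : Submodule F ((Fin n → F) × (Fin n → F))) :
    sympDual C = (symplecticForm F n).orthogonal C :=
  rfl

theorem gram_symplecticForm {ι : Type*} (X Y : Matrix ι (Fin n) F) :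
    (Matrix.of fun i j => symplecticForm F n (X i, Y i) (X j, Y j)) = X * Yᵀ - Y * Xᵀ := by
  ext i j
  simp [mul_apply, dotProduct, mul_comm]

end Symplectic

theorem stmt_3_general {F : Type*} [Field F] {n r t : ℕ}
    (Br : Matrix (Fin r) (Fin n) F) (Bt : Matrix (Fin t) (Fin n) F)
    (A : Matrix (Fin t) (Fin t) F)
    (DA : Submodule F ((Fin n → F) × (Fin n → F)))
    (hDA : DA = Submodule.span F (Set.range (Sum.elim
        (fun i : Fin t => ((Bt i, (A * Bt) i) : (Fin n → F) × (Fin n → F)))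
        (Sum.elim (fun i : Fin r => ((Br i, 0) : (Fin n → F) × (Fin n → F)))
                  (fun i : Fin r => ((0, Br i) : (Fin n → F) × (Fin n → F)))))))
    (M : Matrix ((Fin t) ⊕ (Fin r ⊕ Fin r)) ((Fin t) ⊕ (Fin r ⊕ Fin r)) F)
    (hM : M = Matrix.fromBlocks (Bt * Btᵀ * Aᵀ - A * (Bt * Btᵀ))
        (Matrix.fromCols (-(A * (Bt * Brᵀ))) (Bt * Brᵀ))
        (Matrix.fromRows (Br * Btᵀ * Aᵀ) (-(Br * Btᵀ)))
        (Matrix.fromBlocks 0 (Br * Brᵀ) (-(Br * Brᵀ)) 0)) :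
    Module.finrank F DA - Module.finrank F ↥(DA ⊓ sympDual DA) = M.rank := by
  set X := fromRows Bt (fromRows Br 0)
  set Y := fromRows (A * Bt) (fromRows 0 Br)
  have hDA_rows : DA = span F (Set.range fun i => (X i, Y i)) := by
    rw [hDA]
    congr
    funext i
    rcases i with i | i | i <;> rfl
  have hM_gram : X * Yᵀ - Y * Xᵀ = M := by
    subst hM
    ext (i | i | i) (j | j | j) <;>
      simp [X, Y, transpose_fromRows, mul_fromCols, fromRows_mul, Matrix.mul_assoc]
  rw [hDA_rows, sympDual_eq_orthogonal,
    LinearMap.BilinForm.finrank_span_sub_finrank_inf_orthogonal_eq_rank, gram_symplecticForm,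
    hM_gram]

/-- For the row space `D_A ⊆ F^{2n}` of the block matrix with block rows
`(B_t | A·B_t)`, `(B_r | 0)`, `(0 | B_r)`, one has
`dim D_A - dim (D_A ∩ D_A^⊥ₛ) = rank M`, where `M` is the displayed block matrix. -/
theorem stmt_3 {F : Type*} [Field F] [Fintype F] {n r t : ℕ}
    (hn : 0 < n) (hr : 0 < r) (ht : 0 < t)
    (Br : Matrix (Fin r) (Fin n) F) (Bt : Matrix (Fin t) (Fin n) F)
    (A : Matrix (Fin t) (Fin t) F)
    (DA : Submodule F ((Fin n → F) × (Fin n → F)))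
    (hDA : DA = Submodule.span F (Set.range (Sum.elim
        (fun i : Fin t => ((Bt i, (A * Bt) i) : (Fin n → F) × (Fin n → F)))
        (Sum.elim (fun i : Fin r => ((Br i, 0) : (Fin n → F) × (Fin n → F)))
                  (fun i : Fin r => ((0, Br i) : (Fin n → F) × (Fin n → F)))))))
    (M : Matrix ((Fin t) ⊕ (Fin r ⊕ Fin r)) ((Fin t) ⊕ (Fin r ⊕ Fin r)) F)
    (hM : M = Matrix.fromBlocks (Bt * Btᵀ * Aᵀ - A * (Bt * Btᵀ))
        (Matrix.fromCols (-(A * (Bt * Brᵀ))) (Bt * Brᵀ))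
        (Matrix.fromRows (Br * Btᵀ * Aᵀ) (-(Br * Btᵀ)))
        (Matrix.fromBlocks 0 (Br * Brᵀ) (-(Br * Brᵀ)) 0)) :
    Module.finrank F DA - Module.finrank F ↥(DA ⊓ sympDual DA) = M.rank :=
  stmt_3_general Br Bt A DA hDA M hM
end

section
/- Let p be a prime and let s, m be positive integers such that s divides m and s ≠ m. Set n = p^m − 1. Then for all integers a, b with 0 < a < B(p,m,s) and 0 < b < B(p,m,s), the cyclotomic coset I_a is disjoint from the reciprocal coset I_{n−b}; that is, a·p^{sℓ} mod n ≠ (n−b)·p^{sℓ'} mod n for all nonnegative integers ℓ, ℓ'. -/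
/-!
Write `q = p^s` and `t = m/s`, so that `n = q^t - 1` and `q^t ≡ 1 (mod n)`. If
`a q^ℓ ≡ -b q^ℓ' (mod n)`, cancelling the unit `q^ℓ'` gives `a q^u + b ≡ 0` for some `u < t`,
and multiplying by `q^(t-u)` gives `b q^(t-u) + a ≡ 0`; one of `u`, `t - u` is at most `t/2`.
But for `0 < x, y < B` and `u ≤ t/2` the number `x q^u + y` lies strictly between `0` and `n`,
so it is not divisible by `n`.
-/

/-- The bound `B(p,m,s)` from the paper: `(p^s)^(m/(2s)) - 1` if `m/s` is even, and
`(p^s)^⌈m/(2s)⌉ - p^s + 1` otherwise. -/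
def Bval (p m s : ℕ) : ℕ :=
  if Even (m / s) then (p ^ s) ^ (m / (2 * s)) - 1
  else (p ^ s) ^ ((m + 2 * s - 1) / (2 * s)) - p ^ s + 1

/-- `B(p,m,s)` in terms of `q = p^s` and `t = m/s`. -/
def cosetBound (q t : ℕ) : ℕ :=
  if Even t then q ^ (t / 2) - 1 else q ^ (t / 2 + 1) - q + 1

lemma Bval_mul_left (p s t : ℕ) (hs : 0 < s) : Bval p (s * t) s = cosetBound (p ^ s) t := by
  unfold Bval cosetBound
  rw [Nat.mul_div_cancel_left _ hs]
  obtain ⟨r, rfl | rfl⟩ := Nat.even_or_odd' t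
  · rw [if_pos (even_two_mul r), if_pos (even_two_mul r), Nat.mul_div_cancel_left r two_pos,
      ← mul_assoc, mul_comm s 2, Nat.mul_div_cancel_left r (by omega)]
  · have hodd : ¬Even (2 * r + 1) := Nat.not_even_iff_odd.2 (odd_two_mul_add_one r)
    have hceil : (s * (2 * r + 1) + 2 * s - 1) / (2 * s) = r + 1 := by
      apply Nat.div_eq_of_lt_le
      · have : (r + 1) * (2 * s) + 1 ≤ s * (2 * r + 1) + 2 * s := by nlinarith
        omega
      · have : s * (2 * r + 1) + 2 * s < (r + 1 + 1) * (2 * s) + 1 := by nlinarith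
        omega
    rw [if_neg hodd, if_neg hodd, hceil, Nat.mul_add_div two_pos, Nat.div_eq_of_lt one_lt_two]

lemma mul_pow_add_lt_of_lt_cosetBound {q t x y u : ℕ} (hq : 2 ≤ q) (hx : x < cosetBound q t)
    (hy : y < cosetBound q t) (hu : u ≤ t / 2) : x * q ^ u + y < q ^ t - 1 := by
  have hxu : x * q ^ u ≤ x * q ^ (t / 2) :=
    Nat.mul_le_mul_left x (Nat.pow_le_pow_right (by omega) hu)
  unfold cosetBound at hx hy
  obtain ⟨r, rfl | rfl⟩ := Nat.even_or_odd' t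
  · rw [if_pos (even_two_mul r), Nat.mul_div_cancel_left r two_pos] at *
    have : (x + 1) * q ^ r ≤ q ^ r * q ^ r := Nat.mul_le_mul_right _ (by omega)
    rw [← pow_add, ← two_mul, add_one_mul] at this
    omega
  · have hodd : ¬Even (2 * r + 1) := Nat.not_even_iff_odd.2 (odd_two_mul_add_one r)
    rw [if_neg hodd, Nat.mul_add_div two_pos, Nat.div_eq_of_lt one_lt_two, add_zero] at *
    have hqr : q ≤ q ^ (r + 1) := Nat.le_self_pow (by omega) q
    have : (x + q) * q ^ r ≤ q ^ (r + 1) * q ^ r := Nat.mul_le_mul_right _ (by omega)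
    rw [← pow_add, add_mul, ← pow_succ', show r + 1 + r = 2 * r + 1 by ring] at this
    omega

lemma natCast_mul_pow_add_ne_zero_of_lt_cosetBound {q t x y u : ℕ} (hq : 2 ≤ q)
    (hx : x < cosetBound q t) (hy : y < cosetBound q t) (hy₀ : 0 < y) (hu : u ≤ t / 2) :
    (x : ZMod (q ^ t - 1)) * (q : ZMod (q ^ t - 1)) ^ u + y ≠ 0 := by
  have hlt := mul_pow_add_lt_of_lt_cosetBound hq hx hy hu
  rw [← Nat.cast_pow, ← Nat.cast_mul, ← Nat.cast_add, Ne, ZMod.natCast_eq_zero_iff]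
  exact fun hdvd => (Nat.le_of_dvd (by omega) hdvd).not_gt hlt

lemma natCast_pow_eq_one {q : ℕ} (hq : 0 < q) (t : ℕ) : (q : ZMod (q ^ t - 1)) ^ t = 1 := by
  have : q ^ t - 1 + 1 = q ^ t := Nat.sub_add_cancel (Nat.one_le_pow _ _ hq)
  rw [← Nat.cast_pow, ← this, Nat.cast_add, ZMod.natCast_self, zero_add, Nat.cast_one]

lemma exists_lt_mul_pow_add_eq_zero {R : Type*} [CommRing R] {X a b : R} {t : ℕ} (ht : 0 < t)
    (hX : X ^ t = 1) {k l : ℕ} (h : a * X ^ k + b * X ^ l = 0) :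
    ∃ u < t, a * X ^ u + b = 0 := by
  refine ⟨(k + (t - 1) * l) % t, Nat.mod_lt _ ht, ?_⟩
  have hXl : X ^ ((t - 1) * l) * X ^ l = 1 := by
    rw [← pow_add, ← add_one_mul, Nat.sub_one_add_one ht.ne', pow_mul, hX, one_pow]
  rw [← pow_eq_pow_mod _ hX, pow_add]
  linear_combination X ^ ((t - 1) * l) * h - b * hXl

lemma exists_le_half_mul_pow_add_eq_zero {R : Type*} [CommRing R] {X a b : R} {t : ℕ}
    (ht : 0 < t) (hX : X ^ t = 1) {k l : ℕ} (h : a * X ^ k + b * X ^ l = 0) :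
    ∃ u ≤ t / 2, a * X ^ u + b = 0 ∨ b * X ^ u + a = 0 := by
  obtain ⟨u, hut, hu⟩ := exists_lt_mul_pow_add_eq_zero ht hX h
  by_cases hu2 : u ≤ t / 2
  · exact ⟨u, hu2, .inl hu⟩
  · refine ⟨t - u, by omega, .inr ?_⟩
    have hXu : X ^ (t - u) * X ^ u = 1 := by rw [← pow_add, Nat.sub_add_cancel hut.le, hX]
    linear_combination X ^ (t - u) * hu - a * hXu

theorem stmt_17_general (p s m : ℕ) (hp : p.Prime) (hs : 0 < s) (hm : 0 < m)
    (hsm : s ∣ m) (a b : ℕ) (ha : 0 < a) (haB : a < Bval p m s)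
    (hb : 0 < b) (hbB : b < Bval p m s) :
    ∀ ℓ ℓ' : ℕ,
      a * p ^ (s * ℓ) % (p ^ m - 1) ≠ ((p ^ m - 1) - b) * p ^ (s * ℓ') % (p ^ m - 1) := by
  intro ℓ ℓ' h
  obtain ⟨t, rfl⟩ := hsm
  have hq : 2 ≤ p ^ s := hp.two_le.trans (Nat.le_self_pow hs.ne' p)
  have ht : 0 < t := Nat.pos_of_mul_pos_left hm
  rw [Bval_mul_left p s t hs] at haB hbB
  rw [pow_mul, pow_mul, pow_mul] at h
  generalize p ^ s = q at hq haB hbB h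
  have hbn : b < q ^ t - 1 := by
    simpa using mul_pow_add_lt_of_lt_cosetBound (u := 0) hq (hb.trans hbB) hbB
      (Nat.zero_le _)
  have hcast := (ZMod.natCast_eq_natCast_iff' _ _ _).2 h
  push_cast [Nat.cast_sub hbn.le, ZMod.natCast_self] at hcast
  have hzero : (a * q ^ ℓ + b * q ^ ℓ' : ZMod (q ^ t - 1)) = 0 := by
    linear_combination hcast
  obtain ⟨u, hu, hab | hba⟩ :=
    exists_le_half_mul_pow_add_eq_zero ht (natCast_pow_eq_one (by omega) t) hzero
  · exact natCast_mul_pow_add_ne_zero_of_lt_cosetBound hq haB hbB hb hu hab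
  · exact natCast_mul_pow_add_ne_zero_of_lt_cosetBound hq hbB haB ha hu hba

/-- For `0 < a, b < B(p,m,s)`, the cyclotomic coset `I_a` is disjoint from
the reciprocal coset `I_{n-b}`, where `n = p^m - 1`. -/
theorem stmt_17 (p s m : ℕ) (hp : p.Prime) (hs : 0 < s) (hm : 0 < m)
    (hsm : s ∣ m) (hne : s ≠ m) (a b : ℕ) (ha : 0 < a) (haB : a < Bval p m s)
    (hb : 0 < b) (hbB : b < Bval p m s) :
    ∀ ℓ ℓ' : ℕ,
      a * p ^ (s * ℓ) % (p ^ m - 1) ≠ ((p ^ m - 1) - b) * p ^ (s * ℓ') % (p ^ m - 1) :=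
  stmt_17_general p s m hp hs hm hsm a b ha haB hb hbB
end
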